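/- arXiv:2603.02069 — 2 statements merged into one kernel-verified Lean document; each statement's English description precedes it below -/
import Mathlib

section
/- Let X and Y be jointly Gaussian real random variables with mean zero, unit variances, and correlation ρ ∈ [-1,1]. Then E[sign(X)·sign(Y)] = (2/π)·arcsin(ρ). -/
/-!
Write `Y = ρ X + s Z` with `X, Z` independent standard Gaussians and `s = √(1 - ρ²)`.
If `s > 0`, integrating out `Z` gives `E[sign Y | X] = 2 Φ₀(c X)`, where `c = ρ / s` and
`Φ₀ t = ∫₀ᵗ φ` for the standard Gaussian density `φ`. So `E[sign X sign Y] = 2 G c` with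
`G c = E[sign X · Φ₀(c X)]`. Differentiating under the integral sign,
`G' c = E[|X| φ(c X)] = 1 / (π (1 + c²))`, and `G 0 = 0`, hence `G = arctan / π`; finally
`arctan (ρ / √(1 - ρ²)) = arcsin ρ`. If `s = 0`, then `sign X sign Y = sign ρ` almost surely
and `arcsin ρ = sign ρ · π / 2`.
-/

open MeasureTheory ProbabilityTheory Real Set
open scoped Interval

namespace Real

theorem sign_eq_coe_sign (x : ℝ) : Real.sign x = (SignType.sign x : ℝ) := by
  rcases lt_trichotomy x 0 with h | rfl | h
  · simp [sign_of_neg h, _root_.sign_neg h]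
  · simp
  · simp [sign_of_pos h, _root_.sign_pos h]

theorem sign_mul (x y : ℝ) : Real.sign (x * y) = Real.sign x * Real.sign y := by
  simp only [sign_eq_coe_sign, _root_.sign_mul, SignType.coe_mul]

theorem sign_mul_of_pos {s : ℝ} (hs : 0 < s) (x : ℝ) : Real.sign (s * x) = Real.sign x := by
  rw [sign_mul, sign_of_pos hs, one_mul]

theorem sign_mul_self_eq_abs (x : ℝ) : Real.sign x * x = |x| := by
  rw [sign_eq_coe_sign, _root_.sign_mul_self]

theorem sign_mul_sign_self {x : ℝ} (hx : x ≠ 0) : Real.sign x * Real.sign x = 1 := by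
  rcases sign_apply_eq_of_ne_zero x hx with h | h <;> rw [h] <;> norm_num

theorem abs_sign_le_one (x : ℝ) : |Real.sign x| ≤ 1 := by
  rcases sign_apply_eq x with h | h | h <;> rw [h] <;> norm_num

@[fun_prop]
theorem measurable_sign : Measurable Real.sign :=
  Measurable.ite measurableSet_Iio measurable_const
    (Measurable.ite measurableSet_Ioi measurable_const measurable_const)

theorem arcsin_of_one_le_sq {x : ℝ} (hx : 1 ≤ x ^ 2) : arcsin x = Real.sign x * (π / 2) := by
  rcases le_abs'.1 ((one_le_sq_iff_one_le_abs x).1 hx) with h | h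
  · rw [arcsin_of_le_neg_one h, sign_of_neg (by linarith)]
    ring
  · rw [arcsin_of_one_le h, sign_of_pos (by linarith), one_mul]

end Real

theorem integral_Ioi_mul_exp_neg_mul_sq {b : ℝ} (hb : 0 < b) :
    ∫ x in Ioi (0 : ℝ), x * exp (-b * x ^ 2) = (2 * b)⁻¹ := by
  exact_mod_cast integral_mul_cexp_neg_mul_sq (b := (b : ℂ)) (by simpa using hb)

theorem integral_abs_mul_exp_neg_mul_sq {b : ℝ} (hb : 0 < b) :
    ∫ x, |x| * exp (-b * x ^ 2) = b⁻¹ := by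
  calc ∫ x, |x| * exp (-b * x ^ 2) = ∫ x, |x| * exp (-b * |x| ^ 2) := by simp_rw [sq_abs]
    _ = 2 * ∫ x in Ioi (0 : ℝ), x * exp (-b * x ^ 2) :=
      integral_comp_abs (f := fun x ↦ x * exp (-b * x ^ 2))
    _ = b⁻¹ := by
      rw [integral_Ioi_mul_exp_neg_mul_sq hb]
      field_simp

namespace ProbabilityTheory

theorem continuous_gaussianPDFReal (μ : ℝ) (v : NNReal) : Continuous (gaussianPDFReal μ v) := by
  rw [gaussianPDFReal_def]
  fun_prop

theorem gaussianPDFReal_zero_neg (v : NNReal) (x : ℝ) :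
    gaussianPDFReal 0 v (-x) = gaussianPDFReal 0 v x := by
  simp [gaussianPDFReal]

theorem gaussianPDFReal_le_gaussianPDFReal_mean (μ : ℝ) (v : NNReal) (x : ℝ) :
    gaussianPDFReal μ v x ≤ gaussianPDFReal μ v μ := by
  rw [gaussianPDFReal, gaussianPDFReal, sub_self]
  gcongr _ * rexp ?_
  exact div_le_div_of_nonneg_right (by nlinarith [sq_nonneg (x - μ)]) (by positivity)

theorem gaussianPDFReal_mul_gaussianPDFReal_const_mul (c x : ℝ) :
    gaussianPDFReal 0 1 x * gaussianPDFReal 0 1 (c * x) =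
      (2 * π)⁻¹ * exp (-((1 + c ^ 2) / 2) * x ^ 2) := by
  simp only [gaussianPDFReal, NNReal.coe_one, mul_one, sub_zero]
  rw [mul_mul_mul_comm, ← exp_add, ← mul_inv, mul_self_sqrt (by positivity)]
  congr 2
  ring

theorem hasDerivAt_integral_gaussianPDFReal (μ : ℝ) (v : NNReal) (t : ℝ) :
    HasDerivAt (fun t ↦ ∫ y in 0..t, gaussianPDFReal μ v y) (gaussianPDFReal μ v t) t :=
  intervalIntegral.integral_hasDerivAt_right (integrable_gaussianPDFReal μ v).intervalIntegrable
    (stronglyMeasurable_gaussianPDFReal μ v).stronglyMeasurableAtFilter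
    (continuous_gaussianPDFReal μ v).continuousAt

theorem abs_integral_gaussianPDFReal_le_one (μ : ℝ) {v : NNReal} (hv : v ≠ 0) (t : ℝ) :
    |∫ y in 0..t, gaussianPDFReal μ v y| ≤ 1 := by
  have hφ := integrable_gaussianPDFReal μ v
  rw [← Real.norm_eq_abs]
  calc ‖∫ y in 0..t, gaussianPDFReal μ v y‖ ≤ ∫ y in Ι 0 t, ‖gaussianPDFReal μ v y‖ :=
        intervalIntegral.norm_integral_le_integral_norm_uIoc
    _ ≤ ∫ y, ‖gaussianPDFReal μ v y‖ :=
        setIntegral_le_integral hφ.norm (.of_forall fun _ ↦ norm_nonneg _)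
    _ = 1 := by
        simp_rw [Real.norm_of_nonneg (gaussianPDFReal_nonneg μ v _)]
        exact integral_gaussianPDFReal_eq_one μ hv

theorem integral_sign_add_gaussianReal {v : NNReal} (hv : v ≠ 0) (t : ℝ) :
    ∫ y, Real.sign (t + y) ∂gaussianReal 0 v = 2 * ∫ y in 0..t, gaussianPDFReal 0 v y := by
  have hφ : Integrable (gaussianPDFReal 0 v) := integrable_gaussianPDFReal 0 v
  have hφsign : Integrable fun y ↦ gaussianPDFReal 0 v y * Real.sign (t + y) :=
    hφ.mul_bdd (Real.measurable_sign.comp (measurable_const_add t)).aestronglyMeasurable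
      (.of_forall fun y ↦ Real.abs_sign_le_one _)
  have upper : ∫ y in Ioi (-t), gaussianPDFReal 0 v y * Real.sign (t + y) =
      ∫ y in Iic t, gaussianPDFReal 0 v y := by
    rw [← integral_comp_neg_Iic, integral_Iic_eq_integral_Iio, integral_Iic_eq_integral_Iio]
    refine setIntegral_congr_fun measurableSet_Iio fun y (hy : y < t) ↦ ?_
    rw [gaussianPDFReal_zero_neg, ← sub_eq_add_neg, Real.sign_of_pos (sub_pos.2 hy), mul_one]
  have lower : ∫ y in Iic (-t), gaussianPDFReal 0 v y * Real.sign (t + y) =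
      -∫ y in Iic (-t), gaussianPDFReal 0 v y := by
    rw [← integral_neg, integral_Iic_eq_integral_Iio, integral_Iic_eq_integral_Iio]
    refine setIntegral_congr_fun measurableSet_Iio fun y (hy : y < -t) ↦ ?_
    rw [Real.sign_of_neg (by linarith), mul_neg_one]
  have even : ∫ y in -t..0, gaussianPDFReal 0 v y = ∫ y in 0..t, gaussianPDFReal 0 v y := by
    simpa [gaussianPDFReal_zero_neg] using
      (intervalIntegral.integral_comp_neg (a := 0) (b := t) (gaussianPDFReal 0 v)).symm
  rw [integral_gaussianReal_eq_integral_smul hv]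
  simp_rw [smul_eq_mul]
  rw [← intervalIntegral.integral_Iic_add_Ioi hφsign.integrableOn hφsign.integrableOn, upper,
    lower, neg_add_eq_sub, intervalIntegral.integral_Iic_sub_Iic hφ.integrableOn hφ.integrableOn,
    ← intervalIntegral.integral_add_adjacent_intervals (b := 0) hφ.intervalIntegrable
      hφ.intervalIntegrable, even]
  ring

theorem integral_abs_mul_gaussianPDFReal_const_mul (c : ℝ) :
    ∫ x, |x| * gaussianPDFReal 0 1 (c * x) ∂gaussianReal 0 1 = π⁻¹ * (1 + c ^ 2)⁻¹ := by
  have hb : 0 < (1 + c ^ 2) / 2 := by positivity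
  rw [integral_gaussianReal_eq_integral_smul one_ne_zero]
  simp_rw [smul_eq_mul, mul_left_comm (gaussianPDFReal 0 1 _) |_|,
    gaussianPDFReal_mul_gaussianPDFReal_const_mul, mul_left_comm |_| (2 * π)⁻¹]
  rw [integral_const_mul, integral_abs_mul_exp_neg_mul_sq hb]
  field_simp

theorem hasDerivAt_integral_sign_mul_integral_gaussianPDFReal (c : ℝ) :
    HasDerivAt
      (fun c ↦ ∫ x, Real.sign x * (∫ y in 0..c * x, gaussianPDFReal 0 1 y) ∂gaussianReal 0 1)
      (π⁻¹ * (1 + c ^ 2)⁻¹) c := by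
  have hF_meas (c : ℝ) : AEStronglyMeasurable
      (fun x ↦ Real.sign x * ∫ y in 0..c * x, gaussianPDFReal 0 1 y) (gaussianReal 0 1) :=
    (Real.measurable_sign.mul ((intervalIntegral.continuous_primitive
      (fun _ _ ↦ (integrable_gaussianPDFReal 0 1).intervalIntegrable) 0).comp
        (continuous_const_mul c)).measurable).aestronglyMeasurable
  have hF_int : Integrable (fun x ↦ Real.sign x * ∫ y in 0..c * x, gaussianPDFReal 0 1 y)
      (gaussianReal 0 1) := by
    refine .of_bound (hF_meas c) 1 (.of_forall fun x ↦ ?_)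
    rw [Real.norm_eq_abs, abs_mul]
    exact mul_le_one₀ (Real.abs_sign_le_one x) (abs_nonneg _)
      (abs_integral_gaussianPDFReal_le_one 0 one_ne_zero _)
  have hbound_int : Integrable (fun x ↦ |x| * gaussianPDFReal 0 1 0) (gaussianReal 0 1) :=
    ((memLp_id_gaussianReal 1).integrable le_rfl).abs.mul_const _
  have h_diff (x c : ℝ) :
      HasDerivAt (fun c ↦ Real.sign x * ∫ y in 0..c * x, gaussianPDFReal 0 1 y)
        (|x| * gaussianPDFReal 0 1 (c * x)) c := by
    refine (((hasDerivAt_integral_gaussianPDFReal 0 1 (c * x)).comp c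
      (hasDerivAt_mul_const x)).const_mul (Real.sign x)).congr_deriv ?_
    rw [← Real.sign_mul_self_eq_abs]
    ring
  have h_bound : ∀ᵐ x ∂gaussianReal 0 1, ∀ c ∈ univ,
      ‖|x| * gaussianPDFReal 0 1 (c * x)‖ ≤ |x| * gaussianPDFReal 0 1 0 :=
    .of_forall fun x c _ ↦ by
      rw [Real.norm_of_nonneg (mul_nonneg (abs_nonneg _) (gaussianPDFReal_nonneg 0 1 _))]
      gcongr
      exact gaussianPDFReal_le_gaussianPDFReal_mean 0 1 _
  have h := (hasDerivAt_integral_of_dominated_loc_of_deriv_le Filter.univ_mem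
    (.of_forall hF_meas) hF_int
    (continuous_abs.mul ((continuous_gaussianPDFReal 0 1).comp
      (continuous_const_mul c))).aestronglyMeasurable
    h_bound hbound_int (.of_forall fun x c _ ↦ h_diff x c)).2
  rwa [integral_abs_mul_gaussianPDFReal_const_mul] at h

theorem integral_sign_mul_integral_gaussianPDFReal (c : ℝ) :
    ∫ x, Real.sign x * (∫ y in 0..c * x, gaussianPDFReal 0 1 y) ∂gaussianReal 0 1 =
      arctan c / π := by
  have hG := hasDerivAt_integral_sign_mul_integral_gaussianPDFReal
  have hA (c : ℝ) : HasDerivAt (fun c ↦ arctan c / π) (π⁻¹ * (1 + c ^ 2)⁻¹) c :=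
    ((hasDerivAt_arctan c).div_const π).congr_deriv (by ring)
  refine congrFun (eq_of_fderiv_eq (fun c ↦ (hG c).differentiableAt)
    (fun c ↦ (hA c).differentiableAt)
    (fun c ↦ by rw [(hG c).hasFDerivAt.fderiv, (hA c).hasFDerivAt.fderiv]) 0 (by simp)) c

theorem integral_sign_mul_sign_gaussianReal_prod (a : ℝ) {s : ℝ} (hs : 0 < s) :
    ∫ p, Real.sign p.1 * Real.sign (a * p.1 + s * p.2) ∂(gaussianReal 0 1).prod (gaussianReal 0 1) =
      2 / π * arctan (a / s) := by
  have hint : Integrable (fun p : ℝ × ℝ ↦ Real.sign p.1 * Real.sign (a * p.1 + s * p.2))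
      ((gaussianReal 0 1).prod (gaussianReal 0 1)) := by
    refine .of_bound (by fun_prop) 1 (.of_forall fun p ↦ ?_)
    rw [Real.norm_eq_abs, abs_mul]
    exact mul_le_one₀ (Real.abs_sign_le_one _) (abs_nonneg _) (Real.abs_sign_le_one _)
  have inner (x : ℝ) : ∫ y, Real.sign x * Real.sign (a * x + s * y) ∂gaussianReal 0 1 =
      2 * (Real.sign x * ∫ y in 0..a / s * x, gaussianPDFReal 0 1 y) := by
    have h (y : ℝ) : a * x + s * y = s * (a / s * x + y) := by field_simp
    simp_rw [integral_const_mul, h, Real.sign_mul_of_pos hs]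
    rw [integral_sign_add_gaussianReal one_ne_zero]
    exact mul_left_comm _ _ _
  rw [integral_prod _ hint]
  simp_rw [inner]
  rw [integral_const_mul, integral_sign_mul_integral_gaussianPDFReal]
  ring

theorem integral_sign_mul_sign_const_mul {μ : Measure ℝ} [IsProbabilityMeasure μ]
    [NullSingletonClass μ] (a : ℝ) :
    ∫ x, Real.sign x * Real.sign (a * x) ∂μ = Real.sign a := by
  have h : (fun x ↦ Real.sign x * Real.sign (a * x)) =ᵐ[μ] fun _ ↦ Real.sign a :=
    (Measure.ae_ne μ 0).mono fun x hx ↦ by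
      dsimp only
      rw [Real.sign_mul, mul_left_comm, Real.sign_mul_sign_self hx, mul_one]
  simp [integral_congr_ae h]

end ProbabilityTheory

theorem signSGD_sign_gaussian_identity_general
    {Ω : Type*} [MeasurableSpace Ω] (μ : Measure Ω) [IsProbabilityMeasure μ]
    (ρ : ℝ)
    (Z₁ Z₂ : Ω → ℝ)
    (h₁ : Measure.map Z₁ μ = gaussianReal 0 1)
    (h₂ : Measure.map Z₂ μ = gaussianReal 0 1)
    (hind : IndepFun Z₁ Z₂ μ)
    (X Y : Ω → ℝ)
    (hX : X = Z₁)
    (hY : Y = fun ω => ρ * Z₁ ω + Real.sqrt (1 - ρ ^ 2) * Z₂ ω) :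
    ∫ ω, Real.sign (X ω) * Real.sign (Y ω) ∂μ = (2 / Real.pi) * Real.arcsin ρ := by
  subst X Y
  have hZ : HasLaw (fun ω ↦ (Z₁ ω, Z₂ ω)) ((gaussianReal 0 1).prod (gaussianReal 0 1)) μ :=
    hind.hasLaw_prod ⟨.of_map_ne_zero (h₁ ▸ IsProbabilityMeasure.ne_zero _), h₁⟩
      ⟨.of_map_ne_zero (h₂ ▸ IsProbabilityMeasure.ne_zero _), h₂⟩
  refine (hZ.integral_comp (f := fun p ↦ Real.sign p.1 * Real.sign (ρ * p.1 + √(1 - ρ ^ 2) * p.2))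
    (by fun_prop)).trans ?_
  rcases (sqrt_nonneg (1 - ρ ^ 2)).eq_or_lt with hs | hs
  · have hρ : 1 ≤ ρ ^ 2 := by linarith [sqrt_eq_zero'.1 hs.symm]
    have := nullSingletonClass_gaussianReal (μ := 0) one_ne_zero
    simp only [← hs, zero_mul, add_zero]
    rw [integral_fun_fst (f := fun x ↦ Real.sign x * Real.sign (ρ * x)), probReal_univ, one_smul,
      integral_sign_mul_sign_const_mul, arcsin_of_one_le_sq hρ]
    field_simp
  · have hρ : ρ ∈ Ioo (-1) 1 := by
      rw [mem_Ioo, ← abs_lt, ← sq_lt_one_iff_abs_lt_one]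
      linarith [sqrt_pos.1 hs]
    rw [integral_sign_mul_sign_gaussianReal_prod ρ hs, arcsin_eq_arctan hρ]

/-- Let `X` and `Y` be jointly Gaussian real random variables with mean zero, unit
variances, and correlation `ρ ∈ [-1,1]` (realized via two independent standard
Gaussians `Z₁, Z₂` as `X = Z₁`, `Y = ρ Z₁ + √(1-ρ²) Z₂`).  Then
`E[sign X · sign Y] = (2/π) arcsin ρ`. -/
theorem signSGD_sign_gaussian_identity
    {Ω : Type*} [MeasurableSpace Ω] (μ : Measure Ω) [IsProbabilityMeasure μ]
    (ρ : ℝ) (hρ : ρ ∈ Set.Icc (-1 : ℝ) 1)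
    (Z₁ Z₂ : Ω → ℝ)
    (h₁ : Measure.map Z₁ μ = gaussianReal 0 1)
    (h₂ : Measure.map Z₂ μ = gaussianReal 0 1)
    (hind : IndepFun Z₁ Z₂ μ)
    (X Y : Ω → ℝ)
    (hX : X = Z₁)
    (hY : Y = fun ω => ρ * Z₁ ω + Real.sqrt (1 - ρ ^ 2) * Z₂ ω) :
    ∫ ω, Real.sign (X ω) * Real.sign (Y ω) ∂μ = (2 / Real.pi) * Real.arcsin ρ :=
  signSGD_sign_gaussian_identity_general μ ρ Z₁ Z₂ h₁ h₂ hind X Y hX hY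
end

section
/- Let α > 1/2, β < 1/2, α + β > 1/2, and set p = 2(2α+2β-1)/(2α+1-2β). Consider, for x ∈ (0,1) and e ∈ ℝ, the three functions ℓ₁(x,e) = -(2α+2β-1)x, ℓ₂(x,e) = (2(2α+2β-1)/(2α+1-2β))·((e+1/2)x - 1), and ℓ₃(x,e) = (1-2e)x. Then at e* = α + β and x* = 1/(2α+1), all three are equal: ℓ₁(x*,e*) = ℓ₂(x*,e*) = ℓ₃(x*,e*) = -(2α+2β-1)/(2α+1), and this common value is the minimum over (x,e) ∈ (0,1)×ℝ of max{ℓ₁, ℓ₂, ℓ₃}. -/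
/-- Phase Aa compute-optimal minimax for signSGD.  Let `α > 1/2`, `β < 1/2`,
`α + β > 1/2`, `p = 2(2α+2β-1)/(2α+1-2β)`, and define on `(0,1) × ℝ`:
`ℓ₁(x,e) = -(2α+2β-1)x`, `ℓ₂(x,e) = p·((e+1/2)x - 1)`, `ℓ₃(x,e) = (1-2e)x`.
Then at `e* = α+β`, `x* = 1/(2α+1)`, all three agree with value
`h* = -(2α+2β-1)/(2α+1)`, and `h*` is the minimum of `max{ℓ₁,ℓ₂,ℓ₃}` over
`(x,e) ∈ (0,1) × ℝ`. -/
theorem phaseAa_compute_optimal_minimax (α β : ℝ) (hα : 1 / 2 < α)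
    (hβ : β < 1 / 2) (hab : 1 / 2 < α + β)
    (p : ℝ) (hp : p = 2 * (2 * α + 2 * β - 1) / (2 * α + 1 - 2 * β))
    (l₁ l₂ l₃ : ℝ → ℝ → ℝ)
    (hl₁ : l₁ = fun x _ => -(2 * α + 2 * β - 1) * x)
    (hl₂ : l₂ = fun x e => p * ((e + 1 / 2) * x - 1))
    (hl₃ : l₃ = fun x e => (1 - 2 * e) * x)
    (xs es h : ℝ) (hxs : xs = 1 / (2 * α + 1)) (hes : es = α + β)
    (hh : h = -(2 * α + 2 * β - 1) / (2 * α + 1)) :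
    l₁ xs es = h ∧ l₂ xs es = h ∧ l₃ xs es = h ∧
    ∀ x : ℝ, 0 < x → x < 1 → ∀ e : ℝ,
      h ≤ max (max (l₁ x e) (l₂ x e)) (l₃ x e) := by

  have hS : (0:ℝ) < 2 * α + 1 := by linarith
  have hD : (0:ℝ) < 2 * α + 1 - 2 * β := by linarith
  have hA : (0:ℝ) < 2 * α + 2 * β - 1 := by linarith
  have hpD : p * (2 * α + 1 - 2 * β) = 2 * (2 * α + 2 * β - 1) := by
    rw [hp]; field_simp
  refine ⟨?_, ?_, ?_, ?_⟩
  · rw [hl₁, hxs, hh]; field_simp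
  · rw [hl₂, hxs, hes, hh]
    simp only
    field_simp
    linear_combination -hpD
  · rw [hl₃, hxs, hes, hh]; field_simp; ring
  · intro x hx0 hx1 e
    set M := max (max (l₁ x e) (l₂ x e)) (l₃ x e) with hM
    have hM1 : l₁ x e ≤ M := le_trans (le_max_left _ _) (le_max_left _ _)
    have hM2 : l₂ x e ≤ M := le_trans (le_max_right _ _) (le_max_left _ _)
    have hM3 : l₃ x e ≤ M := le_max_right _ _
    have e2 : (2 * α + 1 - 2 * β) * l₂ x e
        = 2 * (2 * α + 2 * β - 1) * ((e + 1 / 2) * x - 1) := by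
      rw [hl₂]; simp only
      linear_combination ((e + 1 / 2) * x - 1) * hpD
    have t1 : 0 ≤ 2 * (M - l₁ x e) := by linarith
    have t2 : 0 ≤ (2 * α + 1 - 2 * β) * M
        - 2 * (2 * α + 2 * β - 1) * ((e + 1 / 2) * x - 1) := by
      nlinarith [mul_le_mul_of_nonneg_left hM2 hD.le]
    have t3 : 0 ≤ (2 * α + 2 * β - 1) * (M - l₃ x e) :=
      mul_nonneg hA.le (by linarith)
    rw [hh, div_le_iff₀ hS]
    rw [hl₁] at t1
    rw [hl₃] at t3
    simp only at t1 t3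
    nlinarith [t1, t2, t3]
end
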